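/- Let n ≥ 1, m ∈ ℕ ∪ {0}, 0 ≤ α < n, 0 < δ < 1 with mδ < n − α, α̃ = mδ + α, 1 ≤ r ≤ ∞, and let δ̃ < α̃ − n. If the pair of weights (v,w) belongs to H(r, α̃, δ̃), then either v = 0 almost everywhere in ℝⁿ or w = ∞ almost everywhere in ℝⁿ. -/

import Mathlib

open MeasureTheory Metric ENNReal NNReal

noncomputable section

/-- Euclidean space `ℝⁿ`. -/
abbrev E (n : ℕ) := EuclideanSpace ℝ (Fin n)

/-- `(∫ f^p dμ)^(1/p)` for finite `p`, and the essential supremum for `p = ∞`. -/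
noncomputable def eN {n : ℕ} (p : ℝ≥0∞) (f : E n → ℝ≥0∞) (μ : Measure (E n)) : ℝ≥0∞ :=
  if p = ∞ then essSup f μ else (∫⁻ y, f y ^ p.toReal ∂μ) ^ (1 / p.toReal)

/-- The two-weight class `H(r, αt, δt)` with constant `C`, where `r'` denotes the
conjugate exponent of `r` (so the `r = 1`, `r' = ∞` case is the essential supremum,
built into `eN`). -/
def Hclass (n : ℕ) (r' : ℝ≥0∞) (αt δ δt : ℝ) (v w : E n → ℝ≥0∞) (C : ℝ≥0∞) : Prop :=
  ∀ (c : E n) (R : ℝ), 0 < R →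
    essSup (fun y => (w y)⁻¹) (volume.restrict (ball c R)) *
        volume (ball c R) ^ ((δ - δt) / (n : ℝ)) *
        eN r' (fun y =>
          v y * (volume (ball c R) ^ ((1 : ℝ) / (n : ℝ)) +
            ENNReal.ofReal (dist c y)) ^ (-((n : ℝ) - αt + δ))) volume ≤ C

/-- The local condition (L) with constant `C`. -/
def LocalCond (n : ℕ) (r r' : ℝ≥0∞) (αt δt : ℝ) (v w : E n → ℝ≥0∞) (C : ℝ≥0∞) : Prop :=
  ∀ (c : E n) (R : ℝ), 0 < R →
    essSup (fun y => (w y)⁻¹) (volume.restrict (ball c R)) *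
        volume (ball c R) ^ ((αt - δt) / (n : ℝ) - r⁻¹.toReal) *
        eN r' v ((volume (ball c R))⁻¹ • volume.restrict (ball c R)) ≤ C

/-- The global condition (G) with constant `C`. -/
def GlobalCond (n : ℕ) (r' : ℝ≥0∞) (αt δ δt : ℝ) (v w : E n → ℝ≥0∞) (C : ℝ≥0∞) : Prop :=
  ∀ (c : E n) (R : ℝ), 0 < R →
    essSup (fun y => (w y)⁻¹) (volume.restrict (ball c R)) *
        volume (ball c R) ^ ((δ - δt) / (n : ℝ)) *
        eN r' (fun y => v y * (ENNReal.ofReal (dist c y)) ^ (-((n : ℝ) - αt + δ)))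
          (volume.restrict ((ball c R)ᶜ)) ≤ C

/-- `b ∈ Λ(δ)` with Lipschitz-`δ` constant `Cb`. -/
def LipDelta {n : ℕ} (δ Cb : ℝ) (b : E n → ℝ) : Prop :=
  ∀ x y : E n, |b x - b y| ≤ Cb * dist x y ^ δ

/-- The size condition `S*_α` with constant `A`. -/
def SizeCond (n : ℕ) (α A : ℝ) (K : E n → ℝ) : Prop :=
  ∀ x : E n, x ≠ 0 → |K x| ≤ A * ‖x‖ ^ (α - (n : ℝ))

/-- The smoothness condition `H*_{α,∞}` with exponent `γ` and constant `A`. -/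
def SmoothCond (n : ℕ) (α γ A : ℝ) (K : E n → ℝ) : Prop :=
  ∀ x x' y : E n, 2 * dist x x' ≤ dist x y →
    |K (x - y) - K (x' - y)| + |K (y - x) - K (y - x')| ≤
      A * dist x x' ^ γ / dist x y ^ ((n : ℝ) - α + γ)

/-!
Test the condition `H(r, α̃, δ̃)` on the balls `B(0, R)` and let `R → ∞`. If `w` is not a.e. `∞`
and `v` is not a.e. `0`, both are already seen by some ball `B(0, R₀)`. For `R ≥ R₀` the factor
`‖w⁻¹ χ_B‖_∞` stays above its (positive) value on `B(0, R₀)`, and on `B(0, R₀)` the kernel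
`(|B|^{1/n} + |y|)^{-(n-α̃+δ)}` is at least a constant times `R^{-(n-α̃+δ)}`, its exponent being
negative because `α̃ < n`. So the left side of the condition is at least a positive constant times
`R^{δ-δ̃} · R^{-(n-α̃+δ)} = R^{α̃-n-δ̃}`, which is unbounded since `δ̃ < α̃ - n`.
-/

open Filter Topology

theorem eventually_not_ae_restrict_ball {X : Type*} [PseudoMetricSpace X] [MeasurableSpace X]
    [OpensMeasurableSpace X] {μ : Measure X} {p : X → Prop} (h : ¬ ∀ᵐ x ∂μ, p x) (x₀ : X) :
    ∀ᶠ R in atTop, ¬ ∀ᵐ x ∂μ.restrict (ball x₀ R), p x := by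
  rw [ae_iff] at h
  obtain ⟨k, hk⟩ : ∃ k : ℕ, μ ({x | ¬p x} ∩ ball x₀ k) ≠ 0 := by
    by_contra! hk
    refine h (measure_mono_null ?_ (measure_iUnion_null hk))
    rw [← Set.inter_iUnion, iUnion_ball_nat, Set.inter_univ]
  filter_upwards [eventually_ge_atTop (k : ℝ)] with R hR hae
  rw [ae_iff, Measure.restrict_apply' measurableSet_ball] at hae
  exact hk (measure_mono_null (Set.inter_subset_inter_right _ (ball_subset_ball hR)) hae)

theorem tendsto_const_mul_ofReal_rpow_atTop {D : ℝ≥0∞} (hD : D ≠ 0) {e : ℝ} (he : 0 < e) :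
    Tendsto (fun R : ℝ => D * ENNReal.ofReal R ^ e) atTop (𝓝 ∞) := by
  have h : Tendsto (fun R : ℝ => ENNReal.ofReal R ^ e) atTop (𝓝 ∞) := by
    simpa [Function.comp_def, top_rpow_of_pos he] using
      (ENNReal.continuous_rpow_const (y := e)).tendsto ∞ |>.comp ENNReal.tendsto_ofReal_atTop
  simpa [mul_top hD] using ENNReal.Tendsto.const_mul (a := D) h (Or.inl top_ne_zero)

section eN

variable {n : ℕ} {p : ℝ≥0∞} {f g : E n → ℝ≥0∞} {μ ν : Measure (E n)}

theorem eN_eq_zero_iff (hp : p ≠ 0) (hf : AEMeasurable f μ) : eN p f μ = 0 ↔ f =ᵐ[μ] 0 := by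
  unfold eN
  split_ifs with hp_top
  · exact essSup_eq_zero_iff
  · have hq : 0 < p.toReal := ENNReal.toReal_pos hp hp_top
    rw [ENNReal.rpow_eq_zero_iff_of_pos (by positivity), lintegral_eq_zero_iff' (hf.pow_const _)]
    refine eventually_congr (Eventually.of_forall fun y => ?_)
    simp [ENNReal.rpow_eq_zero_iff_of_pos hq]

theorem eN_mono_ae (h : f ≤ᵐ[μ] g) : eN p f μ ≤ eN p g μ := by
  unfold eN
  split_ifs
  · exact essSup_mono_ae h
  · gcongr ?_ ^ _
    exact lintegral_mono_ae (h.mono fun y hy => by gcongr)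

theorem eN_mono_measure (h : μ ≤ ν) : eN p f μ ≤ eN p f ν := by
  unfold eN
  split_ifs
  · exact essSup_mono_measure (Measure.absolutelyContinuous_of_le h)
  · gcongr ?_ ^ _
    exact lintegral_mono' h le_rfl

theorem const_mul_eN_le (hp : p ≠ 0) (K : ℝ≥0∞) :
    K * eN p f μ ≤ eN p (fun y => K * f y) μ := by
  unfold eN
  split_ifs with hp_top
  · exact essSup_const_mul.ge
  · have hq : 0 < p.toReal := ENNReal.toReal_pos hp hp_top
    calc K * (∫⁻ y, f y ^ p.toReal ∂μ) ^ (1 / p.toReal)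
        = (K ^ p.toReal * ∫⁻ y, f y ^ p.toReal ∂μ) ^ (1 / p.toReal) := by
          rw [ENNReal.mul_rpow_of_nonneg _ _ (by positivity), ← ENNReal.rpow_mul,
            mul_one_div_cancel hq.ne', ENNReal.rpow_one]
      _ ≤ (∫⁻ y, (K * f y) ^ p.toReal ∂μ) ^ (1 / p.toReal) := by
          gcongr ?_ ^ _
          simp_rw [ENNReal.mul_rpow_of_nonneg _ _ hq.le]
          exact lintegral_const_mul_le _ _

end eN

theorem volume_ball_rpow {n : ℕ} (hn : 1 ≤ n) (c : E n) {R : ℝ} (hR : 0 ≤ R) (a : ℝ) :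
    volume (ball c R) ^ a = ENNReal.ofReal R ^ ((n : ℝ) * a) * volume (ball (0 : E n) 1) ^ a := by
  have : Nonempty (Fin n) := Fin.pos_iff_nonempty.1 hn
  rw [Measure.addHaar_ball volume c hR, finrank_euclideanSpace_fin, ENNReal.ofReal_pow hR,
    ENNReal.mul_rpow_of_ne_top (by simp) measure_ball_lt_top.ne, ← ENNReal.rpow_natCast,
    ← ENNReal.rpow_mul]

theorem rpow_neg_le_kernel {n : ℕ} (hn : 1 ≤ n) {s : ℝ} (hs : 0 ≤ s) {c y : E n} {R₀ R : ℝ}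
    (hy : y ∈ ball c R₀) (hR : R₀ ≤ R) :
    (ENNReal.ofReal R * (volume (ball (0 : E n) 1) ^ (1 / (n : ℝ)) + 1)) ^ (-s) ≤
      (volume (ball c R) ^ (1 / (n : ℝ)) + ENNReal.ofReal (dist c y)) ^ (-s) := by
  have hyR : dist c y ≤ R := by rw [dist_comm]; exact (mem_ball.1 hy).le.trans hR
  have hn₀ : (n : ℝ) ≠ 0 := Nat.cast_ne_zero.2 (by omega)
  rw [ENNReal.rpow_neg, ENNReal.rpow_neg, ENNReal.inv_le_inv]
  gcongr
  rw [volume_ball_rpow hn c (dist_nonneg.trans hyR), mul_one_div_cancel hn₀, ENNReal.rpow_one,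
    mul_add, mul_one]
  gcongr

theorem Hclass.lower_bound {n : ℕ} {r' : ℝ≥0∞} {αt δ δt : ℝ} {v w : E n → ℝ≥0∞} {C : ℝ≥0∞}
    (hH : Hclass n r' αt δ δt v w C) (hn : 1 ≤ n) (hr' : r' ≠ 0) (hs : αt ≤ n + δ) (c : E n)
    {R₀ R : ℝ} (hR₀ : 0 < R₀) (hR : R₀ ≤ R) :
    essSup (fun y => (w y)⁻¹) (volume.restrict (ball c R₀)) *
        volume (ball (0 : E n) 1) ^ ((δ - δt) / (n : ℝ)) *
        (volume (ball (0 : E n) 1) ^ (1 / (n : ℝ)) + 1) ^ (-((n : ℝ) - αt + δ)) *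
        eN r' v (volume.restrict (ball c R₀)) * ENNReal.ofReal R ^ (αt - n - δt) ≤ C := by
  set s := (n : ℝ) - αt + δ
  set c₁ := volume (ball (0 : E n) 1) ^ (1 / (n : ℝ)) + 1
  have hs₀ : 0 ≤ s := by simp only [s]; linarith
  have hR0 : 0 < R := hR₀.trans_le hR
  have hn₀ : (n : ℝ) ≠ 0 := Nat.cast_ne_zero.2 (by omega)
  have hc₁ : c₁ ≠ ∞ := by
    simp [c₁, ENNReal.rpow_eq_top_iff, measure_ball_lt_top.ne]
  have h_exp : ENNReal.ofReal R ^ (αt - n - δt) =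
      ENNReal.ofReal R ^ (δ - δt) * ENNReal.ofReal R ^ (-s) := by
    rw [← ENNReal.rpow_add _ _ (by simpa using hR0) ofReal_ne_top]
    congr 1
    ring
  have h_w : essSup (fun y => (w y)⁻¹) (volume.restrict (ball c R₀)) ≤
      essSup (fun y => (w y)⁻¹) (volume.restrict (ball c R)) :=
    essSup_mono_measure' (Measure.restrict_mono (ball_subset_ball hR) le_rfl)
  have h_vol : volume (ball c R) ^ ((δ - δt) / (n : ℝ)) =
      ENNReal.ofReal R ^ (δ - δt) * volume (ball (0 : E n) 1) ^ ((δ - δt) / (n : ℝ)) := by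
    rw [volume_ball_rpow hn c hR0.le, mul_div_cancel₀ _ hn₀]
  have h_v : (ENNReal.ofReal R * c₁) ^ (-s) * eN r' v (volume.restrict (ball c R₀)) ≤
      eN r' (fun y => v y * (volume (ball c R) ^ (1 / (n : ℝ)) +
        ENNReal.ofReal (dist c y)) ^ (-s)) volume :=
    calc _ ≤ eN r' (fun y => (ENNReal.ofReal R * c₁) ^ (-s) * v y)
          (volume.restrict (ball c R₀)) := const_mul_eN_le hr' _
      _ ≤ eN r' (fun y => v y * (volume (ball c R) ^ (1 / (n : ℝ)) +
          ENNReal.ofReal (dist c y)) ^ (-s)) (volume.restrict (ball c R₀)) := by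
        refine eN_mono_ae ((ae_restrict_iff' measurableSet_ball).2 (Eventually.of_forall ?_))
        intro y hy
        dsimp only
        rw [mul_comm (v y)]
        exact mul_le_mul_left (rpow_neg_le_kernel hn hs₀ hy hR) _
      _ ≤ _ := eN_mono_measure Measure.restrict_le_self
  calc _ = essSup (fun y => (w y)⁻¹) (volume.restrict (ball c R₀)) *
        (ENNReal.ofReal R ^ (δ - δt) * volume (ball (0 : E n) 1) ^ ((δ - δt) / (n : ℝ))) *
        ((ENNReal.ofReal R * c₁) ^ (-s) * eN r' v (volume.restrict (ball c R₀))) := by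
        rw [h_exp, ENNReal.mul_rpow_of_ne_top ofReal_ne_top hc₁]
        ring
    _ ≤ _ := by
        rw [← h_vol]
        gcongr
    _ ≤ C := hH c R hR0

theorem statement7_general (n m : ℕ) (α δ δt αt : ℝ) (r r' : ℝ≥0∞)
    (hn : 1 ≤ n) (hδ0 : 0 < δ)
    (hmδ : (m : ℝ) * δ < (n : ℝ) - α) (hαt : αt = (m : ℝ) * δ + α)
    (hconj : r⁻¹ + r'⁻¹ = 1)
    (hδt : δt < αt - (n : ℝ))
    (v w : E n → ℝ≥0∞) (hvm : Measurable v)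
    (C : ℝ≥0) (hH : Hclass n r' αt δ δt v w (C : ℝ≥0∞)) :
    (∀ᵐ x ∂(volume : Measure (E n)), v x = 0) ∨
      (∀ᵐ x ∂(volume : Measure (E n)), w x = ∞) := by
  refine or_iff_not_imp_left.2 fun hv => by_contra fun hw => ?_
  have hr' : r' ≠ 0 := by
    rintro rfl
    simp at hconj
  have hs : αt ≤ n + δ := by linarith
  obtain ⟨R₀, hR₀, hw₀, hv₀⟩ := ((eventually_gt_atTop 0).and
    ((eventually_not_ae_restrict_ball hw 0).and (eventually_not_ae_restrict_ball hv 0))).exists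
  set V₁ := volume (ball (0 : E n) 1)
  have hV₁ : 0 < V₁ := by
    have : Nonempty (Fin n) := Fin.pos_iff_nonempty.1 hn
    exact measure_ball_pos _ _ one_pos
  have hV₁_top : V₁ ≠ ∞ := measure_ball_lt_top.ne
  set D := essSup (fun y => (w y)⁻¹) (volume.restrict (ball 0 R₀)) *
    V₁ ^ ((δ - δt) / (n : ℝ)) * (V₁ ^ (1 / (n : ℝ)) + 1) ^ (-((n : ℝ) - αt + δ)) *
    eN r' v (volume.restrict (ball 0 R₀))
  have hD : D ≠ 0 := by
    refine mul_ne_zero (mul_ne_zero (mul_ne_zero ?_ ?_) ?_) ?_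
    · simpa [essSup_eq_zero_iff, EventuallyEq, ENNReal.inv_eq_zero] using hw₀
    · exact (ENNReal.rpow_pos hV₁ hV₁_top).ne'
    · refine (ENNReal.rpow_pos (by positivity) ?_).ne'
      exact add_ne_top.2 ⟨rpow_ne_top_of_nonneg (by positivity) hV₁_top, one_ne_top⟩
    · rwa [Ne, eN_eq_zero_iff hr' hvm.aemeasurable]
  obtain ⟨R, hR, hCR⟩ := ((eventually_ge_atTop R₀).and
    ((tendsto_const_mul_ofReal_rpow_atTop hD (e := αt - n - δt) (by linarith)).eventually_const_lt
      coe_lt_top)).exists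
  exact (hH.lower_bound hn hr' hs 0 hR₀ hR).not_gt hCR

/-- if `δ̃ < α̃ − n`, any pair `(v,w) ∈ H(r, α̃, δ̃)` is trivial:
`v = 0` a.e. or `w = ∞` a.e. -/
theorem statement7 (n m : ℕ) (α δ δt αt : ℝ) (r r' : ℝ≥0∞)
    (hn : 1 ≤ n) (hα0 : 0 ≤ α) (hαn : α < (n : ℝ)) (hδ0 : 0 < δ) (hδ1 : δ < 1)
    (hmδ : (m : ℝ) * δ < (n : ℝ) - α) (hαt : αt = (m : ℝ) * δ + α)
    (hr : 1 ≤ r) (hconj : r⁻¹ + r'⁻¹ = 1)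
    (hδt : δt < αt - (n : ℝ))
    (v w : E n → ℝ≥0∞) (hvm : Measurable v) (hwm : Measurable w)
    (C : ℝ≥0) (hH : Hclass n r' αt δ δt v w (C : ℝ≥0∞)) :
    (∀ᵐ x ∂(volume : Measure (E n)), v x = 0) ∨
      (∀ᵐ x ∂(volume : Measure (E n)), w x = ∞) :=
  statement7_general n m α δ δt αt r r' hn hδ0 hmδ hαt hconj hδt v w hvm C hH
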